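/- (Liu–Talwar, utility and runtime) Let M be a mechanism from D^n to probability distributions on pairs (o,v) ∈ R_o × ℝ, let γ ∈ (0,1), and define A_{LT,γ}(d) as the distribution of the best-value sample among K independent draws from M(d), where K is independent with Pr[K = k] = γ(1−γ)^{k−1} for k ≥ 1. Then E[K] = 1/γ, and for any m ∈ ℝ and β ∈ (0,1] with Pr[val(M(d)) ≥ m] ≥ β, Pr[val(A_{LT,γ}(d)) < m] ≤ γ(1−β)/(β + γ(1−β)) ≤ γ/β. In particular, Pr[val(A_{LT,γ}(d)) ≥ Median(val(M(d)))] ≥ 1 − γ, and if q is such that Pr[val(M(d)) ≥ q] ≥ 1/K' for K' > 1, then Pr[val(A_{LT,γ}(d)) ≥ q] ≥ 1 − K'γ. -/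

import Mathlib

open MeasureTheory
open scoped ENNReal

/-- The median of the value (second coordinate) of a distribution on pairs `(o, v)`:
`Median(val(μ)) = sup {z : Pr_{(o,v) ∼ μ}[v ≥ z] ≥ 1/2}`. -/
noncomputable def medianVal {Ro : Type*} [MeasurableSpace Ro]
    (μ : Measure (Ro × ℝ)) : ℝ :=
  sSup {z : ℝ | (1 : ℝ≥0∞) / 2 ≤ μ {p | z ≤ p.2}}

/-- The Liu–Talwar random-stopping mechanism `A_{LT,γ}` applied to a probability
distribution `μ` on pairs `(o, v)`: sample `K ≥ 1` with `Pr[K = k] = γ(1-γ)^{k-1}`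
(geometric with parameter `γ`), draw `K` independent samples from `μ`, and output a sample
of maximal value, as chosen by the selector family `b`. -/
noncomputable def liuTalwar {Ro : Type*} [MeasurableSpace Ro] (γ : ℝ)
    (b : ∀ k : ℕ, (Fin k → Ro × ℝ) → Ro × ℝ)
    (μ : Measure (Ro × ℝ)) [IsProbabilityMeasure μ] : Measure (Ro × ℝ) :=
  Measure.sum fun k : ℕ =>
    ENNReal.ofReal (γ * (1 - γ) ^ k) •
      (Measure.pi fun _ : Fin (k + 1) => μ).map (b (k + 1))

/-!
The selector returns a sample of maximal value, so the output of `A_{LT,γ}` has value below `m`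
exactly when all `K` samples do. With `a = Pr[v < m]` this has probability
`∑ₖ γ (1-γ)^k a^(k+1) = γ a / (1 - (1-γ) a)`, which increases with `a` and equals
`γ(1-β)/(β+γ(1-β))` at `a = 1 - β`. The median and `1/K'` bounds are the cases `β = 1/2` and
`β = 1/K'`; for the median one needs that the supremum defining it is attained, which holds
because `z ↦ Pr[v ≥ z]` is left-continuous.
-/

open Set

lemma tsum_mul_one_sub_pow_mul_succ {γ : ℝ} (h0 : 0 < γ) (h2 : γ < 2) :
    ∑' k : ℕ, γ * (1 - γ) ^ k * ((k : ℝ) + 1) = 1 / γ := by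
  have hr : ‖1 - γ‖ < 1 := by rw [Real.norm_eq_abs, abs_lt]; constructor <;> linarith
  calc ∑' k : ℕ, γ * (1 - γ) ^ k * ((k : ℝ) + 1)
      = γ * ∑' k : ℕ, ((k + 1).choose 1 : ℝ) * (1 - γ) ^ k := by
        rw [← tsum_mul_left]
        refine tsum_congr fun k => ?_
        push_cast [Nat.choose_one_right]
        ring
    _ = 1 / γ := by
        rw [tsum_choose_mul_geometric_of_norm_lt_one 1 hr, sub_sub_cancel]
        field_simp

lemma mul_one_sub_div_add_le_div {γ β : ℝ} (hγ : 0 ≤ γ) (hβ0 : 0 < β) (hβ1 : β ≤ 1) :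
    γ * (1 - β) / (β + γ * (1 - β)) ≤ γ / β :=
  div_le_div₀ hγ (by nlinarith) hβ0 (by nlinarith)

lemma bddAbove_setOf_le_measure_Ici (ν : Measure ℝ) [IsFiniteMeasure ν] {c : ℝ≥0∞} (hc : c ≠ 0) :
    BddAbove {z | c ≤ ν (Ici z)} := by
  have hempty : ⋂ n : ℕ, Ici (n : ℝ) = ∅ := eq_empty_of_forall_notMem fun x hx =>
    have ⟨n, hn⟩ := exists_nat_gt x
    (mem_iInter.1 hx n).not_gt hn
  have hlim := tendsto_measure_iInter_atTop (μ := ν) (fun _ => measurableSet_Ici.nullMeasurableSet)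
    (fun _ _ h => Ici_subset_Ici.2 (Nat.cast_le.2 h)) ⟨0, measure_ne_top ν _⟩
  rw [hempty, measure_empty] at hlim
  obtain ⟨n, hn⟩ := (hlim.eventually_lt_const (pos_iff_ne_zero.2 hc)).exists
  exact ⟨n, fun z hz => le_of_not_gt fun hnz =>
    (hz.trans (measure_mono (Ici_subset_Ici.2 hnz.le))).not_gt hn⟩

lemma le_measure_Ici_sSup {ν : Measure ℝ} [IsFiniteMeasure ν] {c : ℝ≥0∞} (hc : c < ν univ) :
    c ≤ ν (Ici (sSup {z | c ≤ ν (Ici z)})) := by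
  rcases eq_or_ne c 0 with rfl | hc0
  · exact bot_le
  set S := {z | c ≤ ν (Ici z)}
  have hne : S.Nonempty :=
    ((tendsto_measure_Ici_atBot ν).eventually_const_lt hc).exists.imp fun _ h => h.le
  obtain ⟨u, hu_mono, hu_lim, hu_mem⟩ :=
    exists_seq_tendsto_sSup hne (bddAbove_setOf_le_measure_Ici ν hc0)
  have hIci : ⋂ n, Ici (u n) = Ici (sSup S) := by
    ext x
    simp only [mem_iInter, mem_Ici]
    exact ⟨le_of_tendsto' hu_lim, fun h n => (hu_mono.ge_of_tendsto hu_lim n).trans h⟩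
  have hlim := tendsto_measure_iInter_atTop (μ := ν) (fun _ => measurableSet_Ici.nullMeasurableSet)
    (fun _ _ h => Ici_subset_Ici.2 (hu_mono h)) ⟨0, measure_ne_top ν _⟩
  rw [hIci] at hlim
  exact ge_of_tendsto' hlim hu_mem

lemma half_le_measure_medianVal_le {Ro : Type*} [MeasurableSpace Ro] (μ : Measure (Ro × ℝ))
    [IsProbabilityMeasure μ] : 1 / 2 ≤ μ {p | medianVal μ ≤ p.2} := by
  have hsnd (z : ℝ) : μ {p | z ≤ p.2} = μ.map Prod.snd (Ici z) :=
    (Measure.map_apply measurable_snd measurableSet_Ici).symm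
  simp_rw [medianVal, hsnd]
  have := Measure.isProbabilityMeasure_map (μ := μ) measurable_snd.aemeasurable
  exact le_measure_Ici_sSup (by simp)

lemma map_pi_setOf_snd_lt {Ro : Type*} [MeasurableSpace Ro] {μ : Measure (Ro × ℝ)} [SigmaFinite μ]
    {k : ℕ} {f : (Fin k → Ro × ℝ) → Ro × ℝ} (hf : Measurable f)
    (hmem : ∀ y, f y ∈ range y) (hmax : ∀ y i, (y i).2 ≤ (f y).2) (m : ℝ) :
    (Measure.pi fun _ : Fin k => μ).map f {p | p.2 < m} = μ {p | p.2 < m} ^ k := by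
  have hpre : f ⁻¹' {p | p.2 < m} = univ.pi fun _ => {p | p.2 < m} := by
    ext y
    simp only [mem_preimage, mem_univ_pi]
    refine ⟨fun h i => (hmax y i).trans_lt h, fun h => ?_⟩
    obtain ⟨i, hi⟩ := hmem y
    exact hi ▸ h i
  rw [Measure.map_apply hf (measurableSet_lt measurable_snd measurable_const), hpre, Measure.pi_pi]
  simp

section LiuTalwar

variable {Ro : Type*} [MeasurableSpace Ro] {γ : ℝ} {b : ∀ k : ℕ, (Fin k → Ro × ℝ) → Ro × ℝ}
  {μ : Measure (Ro × ℝ)} [IsProbabilityMeasure μ]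

lemma liuTalwar_apply {s : Set (Ro × ℝ)} (hs : MeasurableSet s) :
    liuTalwar γ b μ s =
      ∑' k : ℕ, ENNReal.ofReal (γ * (1 - γ) ^ k) *
        (Measure.pi fun _ : Fin (k + 1) => μ).map (b (k + 1)) s := by
  simp [liuTalwar, Measure.sum_apply _ hs]

lemma isProbabilityMeasure_liuTalwar (h0 : 0 < γ) (h1 : γ ≤ 1) (hb : ∀ k, Measurable (b k)) :
    IsProbabilityMeasure (liuTalwar γ b μ) := by
  constructor
  have hmap (k : ℕ) := Measure.isProbabilityMeasure_map
    (μ := Measure.pi fun _ : Fin (k + 1) => μ) (hb (k + 1)).aemeasurable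
  simp only [liuTalwar_apply MeasurableSet.univ, measure_univ, mul_one]
  rw [← ENNReal.ofReal_tsum_of_nonneg (fun k => by positivity)
    ((summable_geometric_of_lt_one (by linarith) (by linarith)).mul_left γ), tsum_mul_left,
    tsum_geometric_of_lt_one (by linarith) (by linarith), sub_sub_cancel, mul_inv_cancel₀ h0.ne',
    ENNReal.ofReal_one]

lemma liuTalwar_setOf_snd_lt (h0 : 0 < γ) (h1 : γ ≤ 1) (hb : ∀ k, Measurable (b k))
    (hbmem : ∀ k, 0 < k → ∀ y : Fin k → Ro × ℝ, b k y ∈ range y)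
    (hbmax : ∀ k (y : Fin k → Ro × ℝ) (i : Fin k), (y i).2 ≤ (b k y).2) (m : ℝ) :
    liuTalwar γ b μ {p | p.2 < m} = ENNReal.ofReal
      (γ * μ.real {p | p.2 < m} / (1 - (1 - γ) * μ.real {p | p.2 < m})) := by
  set a := μ.real {p | p.2 < m}
  have ha0 : 0 ≤ a := measureReal_nonneg
  have ha1 : a ≤ 1 := measureReal_le_one
  have hr0 : 0 ≤ (1 - γ) * a := by nlinarith
  have hr1 : (1 - γ) * a < 1 := by nlinarith
  have hμ : μ {p | p.2 < m} = ENNReal.ofReal a := (ofReal_measureReal (measure_ne_top μ _)).symm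
  have hpi (k : ℕ) :=
    map_pi_setOf_snd_lt (μ := μ) (hb (k + 1)) (hbmem (k + 1) k.succ_pos) (hbmax (k + 1)) m
  have hterm (k : ℕ) : ENNReal.ofReal (γ * (1 - γ) ^ k) * μ {p | p.2 < m} ^ (k + 1) =
      ENNReal.ofReal (γ * a * ((1 - γ) * a) ^ k) := by
    rw [hμ, ← ENNReal.ofReal_pow ha0, ← ENNReal.ofReal_mul (by positivity), mul_pow, pow_succ]
    congr 1
    ring
  rw [liuTalwar_apply (measurableSet_lt measurable_snd measurable_const)]
  simp_rw [hpi, hterm]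
  rw [← ENNReal.ofReal_tsum_of_nonneg (fun k => by positivity)
    ((summable_geometric_of_lt_one hr0 hr1).mul_left _), tsum_mul_left,
    tsum_geometric_of_lt_one hr0 hr1, div_eq_mul_inv]

lemma liuTalwar_setOf_snd_lt_le (h0 : 0 < γ) (h1 : γ ≤ 1) (hb : ∀ k, Measurable (b k))
    (hbmem : ∀ k, 0 < k → ∀ y : Fin k → Ro × ℝ, b k y ∈ range y)
    (hbmax : ∀ k (y : Fin k → Ro × ℝ) (i : Fin k), (y i).2 ≤ (b k y).2) {m β : ℝ} (hβ0 : 0 ≤ β)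
    (hβ : ENNReal.ofReal β ≤ μ {p | m ≤ p.2}) :
    liuTalwar γ b μ {p | p.2 < m} ≤ ENNReal.ofReal (γ * (1 - β) / (β + γ * (1 - β))) := by
  rw [liuTalwar_setOf_snd_lt h0 h1 hb hbmem hbmax]
  refine ENNReal.ofReal_le_ofReal ?_
  have hβ' : β ≤ μ.real {p | m ≤ p.2} :=
    (ENNReal.ofReal_le_iff_le_toReal (measure_ne_top μ _)).1 hβ
  have hle : μ.real {p | m ≤ p.2} ≤ 1 := measureReal_le_one
  have hcompl : {p : Ro × ℝ | p.2 < m} = {p | m ≤ p.2}ᶜ := by ext; simp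
  rw [hcompl, probReal_compl_eq_one_sub (measurableSet_le measurable_const measurable_snd),
    div_le_div_iff₀ (by nlinarith) (by nlinarith)]
  nlinarith [mul_nonneg h0.le (sub_nonneg.2 hle)]

lemma ofReal_le_liuTalwar_setOf_le_snd (h0 : 0 < γ) (h1 : γ ≤ 1) (hb : ∀ k, Measurable (b k))
    (hbmem : ∀ k, 0 < k → ∀ y : Fin k → Ro × ℝ, b k y ∈ range y)
    (hbmax : ∀ k (y : Fin k → Ro × ℝ) (i : Fin k), (y i).2 ≤ (b k y).2) {m β : ℝ} (hβ0 : 0 ≤ β)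
    (hβ : ENNReal.ofReal β ≤ μ {p | m ≤ p.2}) :
    ENNReal.ofReal (1 - γ * (1 - β) / (β + γ * (1 - β))) ≤ liuTalwar γ b μ {p | m ≤ p.2} := by
  have := isProbabilityMeasure_liuTalwar (μ := μ) h0 h1 hb
  have hcompl : {p : Ro × ℝ | m ≤ p.2} = {p | p.2 < m}ᶜ := by ext; simp
  have hβ1 : β ≤ 1 := by simpa using hβ.trans prob_le_one
  rw [hcompl, prob_compl_eq_one_sub (measurableSet_lt measurable_snd measurable_const),
    ENNReal.ofReal_sub _ (by positivity), ENNReal.ofReal_one]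
  exact tsub_le_tsub_left (liuTalwar_setOf_snd_lt_le h0 h1 hb hbmem hbmax hβ0 hβ) 1

end LiuTalwar

/-- Liu–Talwar, utility and runtime: Theorem 4.2, utility/runtime parts.
The geometric number of repetitions `K` has `E[K] = 1/γ`; if `Pr[val(M(d)) ≥ m] ≥ β` then
`Pr[val(A_{LT,γ}(d)) < m] ≤ γ(1-β)/(β+γ(1-β)) ≤ γ/β`; in particular
`Pr[val(A_{LT,γ}(d)) ≥ Median(val(M(d)))] ≥ 1-γ`, and if `Pr[val(M(d)) ≥ q] ≥ 1/K'` with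
`K' > 1` then `Pr[val(A_{LT,γ}(d)) ≥ q] ≥ 1 - K'γ`. -/
theorem stmt_16 {D Ro : Type*} [MeasurableSpace Ro] {n : ℕ}
    (M : (Fin n → D) → Measure (Ro × ℝ)) [∀ d, IsProbabilityMeasure (M d)]
    (d : Fin n → D) (γ : ℝ) (hγ : γ ∈ Set.Ioo (0 : ℝ) 1)
    (b : ∀ k : ℕ, (Fin k → Ro × ℝ) → Ro × ℝ)
    (hb : ∀ k, Measurable (b k))
    (hbmem : ∀ k, 0 < k → ∀ y : Fin k → Ro × ℝ, b k y ∈ Set.range y)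
    (hbmax : ∀ k (y : Fin k → Ro × ℝ) (i : Fin k), (y i).2 ≤ (b k y).2) :
    (∑' k : ℕ, γ * (1 - γ) ^ k * ((k : ℝ) + 1)) = 1 / γ ∧
    (∀ m β : ℝ, 0 < β → β ≤ 1 → ENNReal.ofReal β ≤ M d {p | m ≤ p.2} →
      liuTalwar γ b (M d) {p | p.2 < m} ≤
        ENNReal.ofReal (γ * (1 - β) / (β + γ * (1 - β))) ∧
      γ * (1 - β) / (β + γ * (1 - β)) ≤ γ / β) ∧
    ENNReal.ofReal (1 - γ) ≤ liuTalwar γ b (M d) {p | medianVal (M d) ≤ p.2} ∧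
    (∀ K' q : ℝ, 1 < K' → ENNReal.ofReal (1 / K') ≤ M d {p | q ≤ p.2} →
      ENNReal.ofReal (1 - K' * γ) ≤ liuTalwar γ b (M d) {p | q ≤ p.2}) := by
  obtain ⟨h0, h1⟩ := hγ
  refine ⟨tsum_mul_one_sub_pow_mul_succ h0 (by linarith), fun m β hβ0 hβ1 hβ =>
    ⟨liuTalwar_setOf_snd_lt_le h0 h1.le hb hbmem hbmax hβ0.le hβ,
      mul_one_sub_div_add_le_div h0.le hβ0 hβ1⟩, ?_, fun K' q hK' hq => ?_⟩
  · have hmedian : ENNReal.ofReal (1 / 2) ≤ M d {p | medianVal (M d) ≤ p.2} := by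
      simpa [ENNReal.ofReal_div_of_pos] using half_le_measure_medianVal_le (M d)
    refine le_trans (ENNReal.ofReal_le_ofReal ?_)
      (ofReal_le_liuTalwar_setOf_le_snd h0 h1.le hb hbmem hbmax (by norm_num) hmedian)
    have : γ * (1 - 1 / 2) / (1 / 2 + γ * (1 - 1 / 2)) ≤ γ := by
      rw [div_le_iff₀ (by positivity)]
      nlinarith
    linarith
  · have hβ1 : 1 / K' ≤ 1 := (div_le_one (by linarith)).2 hK'.le
    have hβ := mul_one_sub_div_add_le_div h0.le (by positivity) hβ1
    rw [div_div_eq_mul_div, div_one] at hβ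
    refine le_trans (ENNReal.ofReal_le_ofReal ?_)
      (ofReal_le_liuTalwar_setOf_le_snd h0 h1.le hb hbmem hbmax (by positivity) hq)
    linarith
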